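/- Hyper normalisation is not an affine map: for A = Bool and n = 2, N( (1/4)·η(0,false) + (3/4)·η(0,true) ) ≠ (1/4)·N(η(0,false)) + (3/4)·N(η(0,true)), where convex combinations of distributions are taken pointwise. Concretely, the left-hand side is the point mass at (0, φ) with φ(false) = 1/4 and φ(true) = 3/4, while the right-hand side assigns probability 1/4 to (0, η(false)) and 3/4 to (0, η(true)), and these two distributions on Fin 2 × D(Bool) are distinct. -/

import Mathlib

/-! A distribution concentrated on the summand `i` hyper-normalises to the point mass at `(i, μ)`,
`μ` being its `i`-th component. So `N` sends the mixture `μ` of the points `η(0, b)` to `η(0, μ)`,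
whereas the same mixture of the images `N(η(0, b)) = η(0, η b)` only charges pairs whose second
entry is a point mass; the two differ once `μ` is not a point mass, as for `μ` Bernoulli(3/4). -/

open scoped ENNReal

noncomputable section

namespace HyperNorm

variable {A B : Type*} {n m : ℕ}

/-- `ω[i] = Σ_a ω(i,a)`. -/
def fmass (ω : PMF (Fin n × A)) (i : Fin n) : ℝ≥0∞ := ∑' a, ω (i, a)

lemma tsum_fmass (ω : PMF (Fin n × A)) : ∑' i, fmass ω i = 1 := by
  simp only [fmass]
  rw [← ENNReal.tsum_prod']
  exact ω.tsum_coe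

lemma fmass_ne_top (ω : PMF (Fin n × A)) (i : Fin n) : fmass ω i ≠ ⊤ := by
  apply ne_top_of_le_ne_top ENNReal.one_ne_top
  rw [← tsum_fmass ω]
  exact ENNReal.le_tsum i

/-- The first marginal `i ↦ ω[i]` as a distribution. -/
def fstM (ω : PMF (Fin n × A)) : PMF (Fin n) :=
  ⟨fun i => fmass ω i, ENNReal.summable.hasSum_iff.mpr (tsum_fmass ω)⟩

/-- The normalised `i`-th component `ω_i(a) = ω(i,a)/ω[i]` (junk value if `ω[i] = 0`,
which never contributes to `hnorm` below since it is weighted by `ω[i] = 0`). -/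
def ncond (ω : PMF (Fin n × A)) (i : Fin n) : PMF A :=
  if h : fmass ω i ≠ 0 then
    ⟨fun a => ω (i, a) / fmass ω i,
      ENNReal.summable.hasSum_iff.mpr (by
        simp only [div_eq_mul_inv]
        rw [ENNReal.tsum_mul_right, ← div_eq_mul_inv]
        exact ENNReal.div_self h (fmass_ne_top ω i))⟩
  else PMF.pure (ω.support_nonempty.some.2)

/-- Hyper normalisation `N(ω) = Σ_{i with ω[i] ≠ 0} ω[i]·η(i, ω_i)`. -/
def hnorm (ω : PMF (Fin n × A)) : PMF (Fin n × PMF A) :=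
  (fstM ω).bind fun i => PMF.pure (i, ncond ω i)

/-- Graph map `gr(f)(x)(y,x') = f(x)(y) if x' = x, else 0`. -/
def gr {X Y : Type*} (f : X → PMF Y) : X → PMF (Y × X) :=
  fun x => (f x).map fun y => (y, x)

end HyperNorm

namespace PMF

variable {α β : Type*}

theorem map_prodMk_apply [DecidableEq α] (μ : PMF β) (i j : α) (b : β) :
    μ.map (Prod.mk i) (j, b) = if j = i then μ b else 0 := by
  rw [map_apply, tsum_eq_single b]
  · simp only [Prod.mk.injEq, and_true]
  · intro b' hb'
    simp [hb'.symm]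

theorem bernoulli_ne_pure {p : NNReal} (h : p ≤ 1) (hp0 : p ≠ 0) (hp1 : p ≠ 1) (b : Bool) :
    bernoulli p h ≠ pure b := by
  intro hb
  have : (!b) ∈ (bernoulli p h).support := by
    rw [mem_support_bernoulli_iff]
    cases b <;> simpa
  simp [hb] at this

theorem pure_ne_map {x : β} {μ : PMF α} {f : α → β} (hx : ∀ a ∈ μ.support, f a ≠ x) :
    pure x ≠ μ.map f := by
  intro h
  obtain ⟨a, ha, hfa⟩ := (mem_support_map_iff f μ x).mp (h ▸ (mem_support_pure_iff x x).mpr rfl)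
  exact hx a ha hfa

end PMF

namespace HyperNorm

variable {A : Type*} {n : ℕ}

lemma ncond_apply (ω : PMF (Fin n × A)) (i : Fin n) (h : fmass ω i ≠ 0) (a : A) :
    ncond ω i a = ω (i, a) / fmass ω i := by
  simp only [ncond, ne_eq, h, not_false_eq_true, ↓reduceDIte]
  rfl

lemma fstM_map_prodMk (μ : PMF A) (i : Fin n) : fstM (μ.map (Prod.mk i)) = PMF.pure i := by
  refine PMF.ext fun j => ?_
  change ∑' a, _ = _
  simp only [PMF.map_prodMk_apply, PMF.pure_apply]
  split_ifs
  · exact μ.tsum_coe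
  · exact tsum_zero

lemma ncond_map_prodMk (μ : PMF A) (i : Fin n) : ncond (μ.map (Prod.mk i)) i = μ := by
  have hmass : fmass (μ.map (Prod.mk i)) i = 1 := by
    change fstM _ i = 1
    rw [fstM_map_prodMk, PMF.pure_apply_self]
  ext a
  rw [ncond_apply _ _ (by simp [hmass]), hmass, div_one, PMF.map_prodMk_apply, if_pos rfl]

theorem hnorm_map_prodMk (μ : PMF A) (i : Fin n) :
    hnorm (μ.map (Prod.mk i)) = PMF.pure (i, μ) := by
  rw [hnorm, fstM_map_prodMk, PMF.pure_bind, ncond_map_prodMk]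

theorem hnorm_pure (i : Fin n) (a : A) : hnorm (PMF.pure (i, a)) = PMF.pure (i, PMF.pure a) := by
  simpa only [PMF.pure_map] using hnorm_map_prodMk (PMF.pure a) i

theorem hnorm_map_prodMk_ne_bind {μ : PMF A} (hμ : ∀ a, μ ≠ PMF.pure a) (i : Fin n) :
    hnorm (μ.map (Prod.mk i)) ≠ μ.bind fun a => hnorm (PMF.pure (i, a)) := by
  simp only [hnorm_pure, hnorm_map_prodMk]
  exact PMF.pure_ne_map fun a _ h => hμ a (congrArg Prod.snd h).symm

/-- hyper normalisation is not affine: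
`N(¼·η(0,false) + ¾·η(0,true)) ≠ ¼·N(η(0,false)) + ¾·N(η(0,true))`. -/
theorem hnorm_not_affine :
    hnorm ((PMF.bernoulli (3/4)
          (by rw [div_le_one₀ (by norm_num)]; norm_num)).map
        fun b => ((0 : Fin 2), b)) ≠
      (PMF.bernoulli (3/4)
          (by rw [div_le_one₀ (by norm_num)]; norm_num)).bind
        fun b => hnorm (PMF.pure ((0 : Fin 2), b)) :=
  hnorm_map_prodMk_ne_bind (PMF.bernoulli_ne_pure _ (by norm_num) (by norm_num)) 0

end HyperNorm
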